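/- arXiv:1702.02770 — 7 statements merged into one kernel-verified Lean document; each statement's English description precedes it below -/
import Mathlib

section
/- Let m : ℤ[n₀, n₂] → ℝ satisfy: m(n+1) ≤ Q·m(n) for n in [n₀, n₁−2]; m(n₁) ≤ T·m(n₁−1); m(n) ≤ M·m(n) + L·m(n₁) for n in [n₁+1, n₁+d]; and m(n+1) ≤ Q·m(n) for n in [n₁+d, n₂−1]; with Q > 0, T > 0, L > 0, M < 1, and m(n₀) ≤ 0. Then m(n) ≤ 0 on all of ℤ[n₀, n₂]. -/
/-- Single-impulse (p = 1) comparison lemma for non-instantaneous impulsive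
difference inequalities. -/
theorem stmt_4 (n₀ n₁ n₂ d : ℤ) (hn₁ : n₀ + 3 ≤ n₁) (hd₁ : 1 ≤ d)
    (hd₂ : d ≤ n₂ - n₁ - 2)
    (m : ℤ → ℝ) (Q T L M : ℝ)
    (hQ : Q > 0) (hT : T > 0) (hL : L > 0) (hM : M < 1)
    (hrec1 : ∀ n : ℤ, n₀ ≤ n → n ≤ n₁ - 2 → m (n + 1) ≤ Q * m n)
    (hjump : m n₁ ≤ T * m (n₁ - 1))
    (himp : ∀ n : ℤ, n₁ + 1 ≤ n → n ≤ n₁ + d → m n ≤ M * m n + L * m n₁)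
    (hrec2 : ∀ n : ℤ, n₁ + d ≤ n → n ≤ n₂ - 1 → m (n + 1) ≤ Q * m n)
    (h0 : m n₀ ≤ 0) :
    ∀ n : ℤ, n₀ ≤ n → n ≤ n₂ → m n ≤ 0 := by
  -- Step 1: m n ≤ 0 for n₀ ≤ n ≤ n₁ - 1
  have h1 : ∀ n : ℤ, n₀ ≤ n → n ≤ n₁ - 1 → m n ≤ 0 :=
    Int.le_induction (fun _ => h0) (fun k hk ih hk2 => by
      have hih := ih (by omega)
      have := hrec1 k hk (by omega)
      calc m (k + 1) ≤ Q * m k := this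
        _ ≤ 0 := mul_nonpos_of_nonneg_of_nonpos hQ.le hih)
  -- Step 2: m n₁ ≤ 0
  have h2 : m n₁ ≤ 0 := by
    have := h1 (n₁ - 1) (by omega) (by omega)
    calc m n₁ ≤ T * m (n₁ - 1) := hjump
      _ ≤ 0 := mul_nonpos_of_nonneg_of_nonpos hT.le this
  -- Step 3: m n ≤ 0 for n₁ + 1 ≤ n ≤ n₁ + d
  have h3 : ∀ n : ℤ, n₁ + 1 ≤ n → n ≤ n₁ + d → m n ≤ 0 := by
    intro n ha hb
    have h := himp n ha hb
    have hL0 : L * m n₁ ≤ 0 := mul_nonpos_of_nonneg_of_nonpos hL.le h2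
    nlinarith
  -- Step 4: m n ≤ 0 for n₁ + d ≤ n ≤ n₂
  have h4 : ∀ n : ℤ, n₁ + d ≤ n → n ≤ n₂ → m n ≤ 0 :=
    Int.le_induction (fun _ => h3 (n₁ + d) (by omega) le_rfl) (fun k hk ih hk2 => by
      have hih := ih (by omega)
      have := hrec2 k hk (by omega)
      calc m (k + 1) ≤ Q * m k := this
        _ ≤ 0 := mul_nonpos_of_nonneg_of_nonpos hQ.le hih)
  intro n ha hb
  rcases le_or_gt n (n₁ - 1) with h | h
  · exact h1 n ha h
  rcases eq_or_lt_of_le (show n₁ ≤ n by omega) with h' | h'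
  · exact h' ▸ h2
  rcases le_or_gt n (n₁ + d) with h'' | h''
  · exact h3 n (by omega) h''
  · exact h4 n (by omega) hb
end

section
/- In the single-impulse linear problem of the previous context, the solution at the end of the impulse interval satisfies u(n₁+d) = (L/(1−M))·(T·u(n₁−1) + μ) + γ(n₁+d)/(1−M), where u(n₁−1) = x₀·Q^{n₁−1−n₀} + Σ_{j=n₀}^{n₁−2} σ(j)·Q^{n₁−2−j}. -/
lemma aux_closed (n₀ N : ℤ) (Q x₀ : ℝ) (σ u : ℤ → ℝ)
    (h0 : u n₀ = x₀)
    (hrec : ∀ n : ℤ, n₀ ≤ n → n ≤ N → u (n + 1) = Q * u n + σ n) :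
    ∀ k : ℕ, n₀ + k ≤ N + 1 →
      u (n₀ + k) = x₀ * Q ^ k +
        ∑ j ∈ Finset.Icc n₀ (n₀ + k - 1), σ j * Q ^ (n₀ + k - 1 - j).toNat := by
  intro k
  induction k with
  | zero =>
    intro _
    simp [h0, Finset.Icc_eq_empty_of_lt (by omega : n₀ + (0:ℕ) - 1 < n₀)]
  | succ k ih =>
    intro hk
    have hk' : n₀ + (k:ℤ) ≤ N := by push_cast at hk ⊢; omega
    have ih' := ih (by omega)
    have hstep := hrec (n₀ + k) (by omega) hk'
    have hcast : (n₀ + ((k:ℕ)+1:ℕ) : ℤ) = (n₀ + k) + 1 := by push_cast; ring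
    rw [hcast, hstep, ih']
    have hle : n₀ ≤ n₀ + (k:ℤ) := by omega
    have htop : ∑ j ∈ Finset.Icc n₀ (n₀ + (k:ℤ)), σ j * Q ^ ((n₀ + (k:ℤ)) - j).toNat
        = (∑ j ∈ Finset.Icc n₀ (n₀ + (k:ℤ) - 1), σ j * Q ^ ((n₀ + (k:ℤ)) - j).toNat)
          + σ (n₀ + k) * Q ^ ((n₀ + (k:ℤ)) - (n₀ + k)).toNat := by
      have hset : Finset.Icc n₀ (n₀ + (k:ℤ)) =
          insert (n₀ + (k:ℤ)) (Finset.Icc n₀ (n₀ + (k:ℤ) - 1)) := by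
        ext x; simp only [Finset.mem_Icc, Finset.mem_insert]; omega
      rw [hset, Finset.sum_insert (by simp only [Finset.mem_Icc]; omega)]
      ring
    have hmul : Q * ∑ j ∈ Finset.Icc n₀ (n₀ + (k:ℤ) - 1), σ j * Q ^ (n₀ + (k:ℤ) - 1 - j).toNat
        = ∑ j ∈ Finset.Icc n₀ (n₀ + (k:ℤ) - 1), σ j * Q ^ ((n₀ + (k:ℤ)) - j).toNat := by
      rw [Finset.mul_sum]
      refine Finset.sum_congr rfl fun j hj => ?_
      simp only [Finset.mem_Icc] at hj
      have : ((n₀ + (k:ℤ)) - j).toNat = (n₀ + (k:ℤ) - 1 - j).toNat + 1 := by omega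
      rw [this, pow_succ]; ring
    have hsimp : n₀ + (k:ℤ) + 1 - 1 = n₀ + (k:ℤ) := by ring
    rw [hsimp, htop]
    rw [mul_add, hmul]
    have h0' : ((n₀ + (k:ℤ)) - (n₀ + k)).toNat = 0 := by omega
    rw [h0']
    ring

/-- Value of the solution of the single-impulse linear problem at the end of the
impulse interval, together with the closed form of the pre-jump value. -/
theorem stmt_9 (n₀ n₁ d : ℤ) (hn₁ : n₀ + 3 ≤ n₁) (hd : 1 ≤ d)
    (Q T M L μ x₀ : ℝ) (hM : M ≠ 1) (σ γ : ℤ → ℝ) (u : ℤ → ℝ)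
    (h0 : u n₀ = x₀)
    (hrec : ∀ n : ℤ, n₀ ≤ n → n ≤ n₁ - 2 → u (n + 1) = Q * u n + σ n)
    (hjump : u n₁ = T * u (n₁ - 1) + μ)
    (himp : ∀ n : ℤ, n₁ + 1 ≤ n → n ≤ n₁ + d → u n = M * u n + L * u n₁ + γ n) :
    u (n₁ + d) = (L / (1 - M)) * (T * u (n₁ - 1) + μ) + γ (n₁ + d) / (1 - M) ∧
    u (n₁ - 1) = x₀ * Q ^ (n₁ - 1 - n₀).toNat
        + ∑ j ∈ Finset.Icc n₀ (n₁ - 2), σ j * Q ^ (n₁ - 2 - j).toNat := by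
  constructor
  · have h := himp (n₁ + d) (by omega) le_rfl
    have hM' : (1 - M) ≠ 0 := by intro h'; apply hM; linarith
    field_simp
    rw [hjump] at h
    linarith [h]
  · have key := aux_closed n₀ (n₁ - 2) Q x₀ σ u h0 hrec (n₁ - 1 - n₀).toNat (by omega)
    have h1 : n₀ + ((n₁ - 1 - n₀).toNat : ℤ) = n₁ - 1 := by omega
    rw [h1] at key
    simpa [show n₁ - 1 - 1 = n₁ - 2 by ring] using key
end

section
/- Suppose f(n,·,·) satisfies the one-sided Lipschitz condition f(n,x₁,x₃) − f(n,x₂,x₄) ≤ P(n)(x₁−x₂) + K(n)(x₃−x₄) for x₁ ≤ x₂ and x₃ ≤ x₄, with P(n) > 0 and K(n) < 1. If α satisfies α(n+1) ≤ f(n,α(n),α(n+1)) and α¹ is defined (implicitly) by α¹(n+1) = P(n)α¹(n) + K(n)α¹(n+1) + f(n,α(n),α(n+1)) − P(n)α(n) − K(n)α(n+1) with α¹(n₀) ≥ α(n₀), then α(n) ≤ α¹(n) for all n in [n₀, N]. -/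
/-! Rearranging the linearized equation gives
`(1 - K n) (α¹ (n+1) - α (n+1)) = P n (α¹ n - α n) + (f n (α n) (α (n+1)) - α (n+1))`,
whose last summand is nonnegative because `α` is a lower solution. Since `P n ≥ 0` and
`1 - K n > 0`, the inequality `α ≤ α¹` therefore propagates from `n` to `n + 1`. -/

theorem Int.le_induction_Icc {m N : ℤ} {p : ℤ → Prop} (base : p m)
    (succ : ∀ n, m ≤ n → n ≤ N - 1 → p n → p (n + 1)) :
    ∀ n, m ≤ n → n ≤ N → p n := by
  intro n hmn
  induction n, hmn using Int.leInduction with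
  | base => exact fun _ => base
  | succ n hmn ih => exact fun hn => succ n hmn (by omega) (ih (by omega))

theorem le_of_linearized_step {𝕜 : Type*} [Field 𝕜] [LinearOrder 𝕜] [IsStrictOrderedRing 𝕜]
    {p k a b a' b' F : 𝕜} (hp : 0 ≤ p) (hk : k < 1) (hlow : a' ≤ F)
    (heq : b' = p * b + k * b' + F - p * a - k * a') (hab : a ≤ b) : a' ≤ b' := by
  have key : (1 - k) * (b' - a') = p * (b - a) + (F - a') := by linear_combination heq
  have hnonneg : 0 ≤ (1 - k) * (b' - a') := by
    rw [key]; exact add_nonneg (mul_nonneg hp (sub_nonneg.2 hab)) (sub_nonneg.2 hlow)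
  exact sub_nonneg.1 (nonneg_of_mul_nonneg_right hnonneg (sub_pos.2 hk))

theorem stmt_10_general (n₀ N : ℤ) (f : ℤ → ℝ → ℝ → ℝ) (P K : ℤ → ℝ)
    (hP : ∀ n : ℤ, n₀ ≤ n → n ≤ N - 1 → P n > 0)
    (hK : ∀ n : ℤ, n₀ ≤ n → n ≤ N - 1 → K n < 1)
    (α α₁ : ℤ → ℝ)
    (hlow : ∀ n : ℤ, n₀ ≤ n → n ≤ N - 1 → α (n + 1) ≤ f n (α n) (α (n + 1)))
    (heq : ∀ n : ℤ, n₀ ≤ n → n ≤ N - 1 →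
      α₁ (n + 1) = P n * α₁ n + K n * α₁ (n + 1)
        + f n (α n) (α (n + 1)) - P n * α n - K n * α (n + 1))
    (h0 : α n₀ ≤ α₁ n₀) :
    ∀ n : ℤ, n₀ ≤ n → n ≤ N → α n ≤ α₁ n :=
  Int.le_induction_Icc h0 fun n hn hnN ih =>
    le_of_linearized_step (hP n hn hnN).le (hK n hn hnN) (hlow n hn hnN) (heq n hn hnN) ih

/-- One step of the monotone iterative scheme (no impulses): the next iterate
dominates the lower solution. -/
theorem stmt_10 (n₀ N : ℤ) (f : ℤ → ℝ → ℝ → ℝ) (P K : ℤ → ℝ)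
    (hP : ∀ n : ℤ, n₀ ≤ n → n ≤ N - 1 → P n > 0)
    (hK : ∀ n : ℤ, n₀ ≤ n → n ≤ N - 1 → K n < 1)
    (hf : ∀ n : ℤ, n₀ ≤ n → n ≤ N - 1 → ∀ x₁ x₂ x₃ x₄ : ℝ, x₁ ≤ x₂ → x₃ ≤ x₄ →
      f n x₁ x₃ - f n x₂ x₄ ≤ P n * (x₁ - x₂) + K n * (x₃ - x₄))
    (α α₁ : ℤ → ℝ)
    (hlow : ∀ n : ℤ, n₀ ≤ n → n ≤ N - 1 → α (n + 1) ≤ f n (α n) (α (n + 1)))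
    (heq : ∀ n : ℤ, n₀ ≤ n → n ≤ N - 1 →
      α₁ (n + 1) = P n * α₁ n + K n * α₁ (n + 1)
        + f n (α n) (α (n + 1)) - P n * α n - K n * α (n + 1))
    (h0 : α n₀ ≤ α₁ n₀) :
    ∀ n : ℤ, n₀ ≤ n → n ≤ N → α n ≤ α₁ n :=
  stmt_10_general n₀ N f P K hP hK α α₁ hlow heq h0
end

section
/- With the same one-sided Lipschitz condition on f (P(n) > 0, K(n) < 1), the operator Q sending η to the unique solution u of u(n+1) = P(n)u(n) + K(n)u(n+1) + f(n,η(n),η(n+1)) − P(n)η(n) − K(n)η(n+1), u(n₀) = x₀, is monotone: if η₁(n) ≤ η₂(n) for all n, then (Qη₁)(n) ≤ (Qη₂)(n) for all n in [n₀, N]. -/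
/-- Monotonicity of the iteration operator in the impulse-free case. -/
theorem stmt_11 (n₀ N : ℤ) (f : ℤ → ℝ → ℝ → ℝ) (P K : ℤ → ℝ) (x₀ : ℝ)
    (hP : ∀ n : ℤ, n₀ ≤ n → n ≤ N - 1 → P n > 0)
    (hK : ∀ n : ℤ, n₀ ≤ n → n ≤ N - 1 → K n < 1)
    (hf : ∀ n : ℤ, n₀ ≤ n → n ≤ N - 1 → ∀ x₁ x₂ x₃ x₄ : ℝ, x₁ ≤ x₂ → x₃ ≤ x₄ →
      f n x₁ x₃ - f n x₂ x₄ ≤ P n * (x₁ - x₂) + K n * (x₃ - x₄))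
    (η₁ η₂ u₁ u₂ : ℤ → ℝ)
    (hη : ∀ n : ℤ, n₀ ≤ n → n ≤ N → η₁ n ≤ η₂ n)
    (hu₁ : u₁ n₀ = x₀)
    (heq₁ : ∀ n : ℤ, n₀ ≤ n → n ≤ N - 1 →
      u₁ (n + 1) = P n * u₁ n + K n * u₁ (n + 1)
        + f n (η₁ n) (η₁ (n + 1)) - P n * η₁ n - K n * η₁ (n + 1))
    (hu₂ : u₂ n₀ = x₀)
    (heq₂ : ∀ n : ℤ, n₀ ≤ n → n ≤ N - 1 →
      u₂ (n + 1) = P n * u₂ n + K n * u₂ (n + 1)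
        + f n (η₂ n) (η₂ (n + 1)) - P n * η₂ n - K n * η₂ (n + 1)) :
    ∀ n : ℤ, n₀ ≤ n → n ≤ N → u₁ n ≤ u₂ n := by
  suffices h : ∀ k : ℕ, n₀ + k ≤ N → u₁ (n₀ + k) ≤ u₂ (n₀ + k) by
    intro n hn hN
    obtain ⟨k, rfl⟩ : ∃ k : ℕ, n = n₀ + k := ⟨(n - n₀).toNat, by omega⟩
    exact h k hN
  intro k
  induction k with
  | zero => intro _; simpa using (hu₁.trans hu₂.symm).le
  | succ k ih =>
    intro hle
    set n := n₀ + (k : ℤ) with hndef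
    have hcast : n₀ + ((k : ℕ) + 1 : ℕ) = n + 1 := by push_cast; ring
    rw [hcast] at hle ⊢
    have hn : n₀ ≤ n := by omega
    have hn1 : n ≤ N - 1 := by omega
    have ihn : u₁ n ≤ u₂ n := ih (by omega)
    have hPn := hP n hn hn1
    have hKn := hK n hn hn1
    have hfn := hf n hn hn1 (η₁ n) (η₂ n) (η₁ (n+1)) (η₂ (n+1))
      (hη n hn (by omega)) (hη (n+1) (by omega) (by omega))
    have h1 := heq₁ n hn hn1
    have h2 := heq₂ n hn hn1
    have key : (1 - K n) * (u₁ (n+1) - u₂ (n+1)) ≤ P n * (u₁ n - u₂ n) := by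
      nlinarith [hfn, h1, h2]
    have h3 : P n * (u₁ n - u₂ n) ≤ 0 := by nlinarith
    nlinarith [le_trans key h3]
end

section
/- Let f satisfy the one-sided Lipschitz condition with P(n) > 0, K(n) < 1, let η be a lower solution (η(n+1) ≤ f(n,η(n),η(n+1)), η(n₀) ≤ x₀), and let m = Qη be the unique solution of the linearized problem m(n+1) = P(n)m(n) + K(n)m(n+1) + f(n,η(n),η(n+1)) − P(n)η(n) − K(n)η(n+1), m(n₀) = x₀. Then m is again a lower solution: m(n+1) ≤ f(n,m(n),m(n+1)) for all n in [n₀, N−1] and m(n₀) ≤ x₀. -/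
/-- Invariance of the set of lower solutions under the iteration operator,
impulse-free case. -/
theorem stmt_14 (n₀ N : ℤ) (f : ℤ → ℝ → ℝ → ℝ) (P K : ℤ → ℝ) (x₀ : ℝ)
    (hP : ∀ n : ℤ, n₀ ≤ n → n ≤ N - 1 → P n > 0)
    (hK : ∀ n : ℤ, n₀ ≤ n → n ≤ N - 1 → K n < 1)
    (hf : ∀ n : ℤ, n₀ ≤ n → n ≤ N - 1 → ∀ x₁ x₂ x₃ x₄ : ℝ, x₁ ≤ x₂ → x₃ ≤ x₄ →
      f n x₁ x₃ - f n x₂ x₄ ≤ P n * (x₁ - x₂) + K n * (x₃ - x₄))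
    (η m : ℤ → ℝ)
    (hηlow : ∀ n : ℤ, n₀ ≤ n → n ≤ N - 1 → η (n + 1) ≤ f n (η n) (η (n + 1)))
    (hη0 : η n₀ ≤ x₀)
    (hm0 : m n₀ = x₀)
    (hmeq : ∀ n : ℤ, n₀ ≤ n → n ≤ N - 1 →
      m (n + 1) = P n * m n + K n * m (n + 1)
        + f n (η n) (η (n + 1)) - P n * η n - K n * η (n + 1)) :
    (∀ n : ℤ, n₀ ≤ n → n ≤ N - 1 → m (n + 1) ≤ f n (m n) (m (n + 1))) ∧
    m n₀ ≤ x₀ := by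
  -- First establish η n ≤ m n for n₀ ≤ n ≤ N
  have keyN : ∀ k : ℕ, n₀ + k ≤ N → η (n₀ + k) ≤ m (n₀ + k) := by
    intro k
    induction k with
    | zero => intro _; simpa [hm0] using hη0
    | succ k ih =>
      intro hN
      set n : ℤ := n₀ + k with hn_def
      have hcast : n₀ + (k + 1 : ℕ) = n + 1 := by push_cast; ring
      rw [hcast]
      have hn : n₀ ≤ n := by omega
      have hn1 : n ≤ N - 1 := by push_cast at hN; omega
      have ihn : η n ≤ m n := ih (by omega)
      have hPn := hP n hn hn1
      have hKn := hK n hn hn1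
      have heq := hmeq n hn hn1
      have hlow := hηlow n hn hn1
      nlinarith [mul_nonneg (le_of_lt hPn) (sub_nonneg.mpr ihn)]
  have key : ∀ n : ℤ, n₀ ≤ n → n ≤ N → η n ≤ m n := by
    intro n hn hN
    have : n = n₀ + ((n - n₀).toNat : ℤ) := by omega
    rw [this]
    exact keyN _ (by omega)
  constructor
  · intro n hn hn1
    have h1 : η n ≤ m n := key n hn (by omega)
    have h2 : η (n + 1) ≤ m (n + 1) := key (n + 1) (by omega) (by omega)
    have hlip := hf n hn hn1 (η n) (m n) (η (n + 1)) (m (n + 1)) h1 h2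
    have heq := hmeq n hn hn1
    linarith
  · rw [hm0]
end

section
/- Under the hypotheses of the monotone iterative theorem (f one-sided Lipschitz with P(n) > 0, K(n) < 1; α a lower and β an upper solution with α ≤ β on ℤ[n₀,N]), if u is any solution of u(n+1) = f(n,u(n),u(n+1)), u(n₀) = x₀ with α(n) ≤ u(n) ≤ β(n) for all n, and α^{(j+1)} = Qα^{(j)} as in the iteration, then α^{(j)}(n) ≤ u(n) for all j and all n in [n₀,N]. -/
/-!
Writing `Q η` for the solution of the problem linearized at `η`, one-sided Lipschitz continuity
of `f` shows that `w = Q η - u` satisfies `w (n + 1) ≤ P n * w n + K n * w (n + 1)` whenever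
`η ≤ u`, and `w n₀ = 0`. Since `P ≥ 0` and `K < 1` this forces `w ≤ 0` step by step, so `Q`
maps functions below the solution `u` to functions below `u`; induction on `j` finishes.
-/

theorem nonpos_of_le_linear_recurrence {n₀ N : ℤ} {P K w : ℤ → ℝ}
    (hP : ∀ n : ℤ, n₀ ≤ n → n ≤ N - 1 → 0 ≤ P n)
    (hK : ∀ n : ℤ, n₀ ≤ n → n ≤ N - 1 → K n < 1)
    (hw₀ : w n₀ ≤ 0)
    (hw : ∀ n : ℤ, n₀ ≤ n → n ≤ N - 1 → w (n + 1) ≤ P n * w n + K n * w (n + 1)) :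
    ∀ n : ℤ, n₀ ≤ n → n ≤ N → w n ≤ 0 := by
  intro n hn
  induction n, hn using Int.leInduction with
  | base => exact fun _ => hw₀
  | succ n hn ih =>
    intro hnN
    have hn' : n ≤ N - 1 := by omega
    have hPw : P n * w n ≤ 0 := mul_nonpos_of_nonneg_of_nonpos (hP n hn hn') (ih (by omega))
    have h : (1 - K n) * w (n + 1) ≤ 0 := by linarith [hw n hn hn']
    exact nonpos_of_mul_nonpos_right h (sub_pos.2 (hK n hn hn'))

theorem linearized_step_sub_le {F : ℝ → ℝ → ℝ} {p k a b x y v w : ℝ}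
    (hF : ∀ x₁ x₂ x₃ x₄ : ℝ, x₁ ≤ x₂ → x₃ ≤ x₄ → F x₁ x₃ - F x₂ x₄ ≤ p * (x₁ - x₂) + k * (x₃ - x₄))
    (hax : a ≤ x) (hby : b ≤ y) (hy : y = F x y)
    (hw : w = p * v + k * w + F a b - p * a - k * b) :
    w - y ≤ p * (v - x) + k * (w - y) := by
  linarith [hF a x b y hax hby]

theorem linearized_solution_le_of_le {n₀ N : ℤ} {f : ℤ → ℝ → ℝ → ℝ} {P K : ℤ → ℝ}
    (hP : ∀ n : ℤ, n₀ ≤ n → n ≤ N - 1 → 0 ≤ P n)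
    (hK : ∀ n : ℤ, n₀ ≤ n → n ≤ N - 1 → K n < 1)
    (hf : ∀ n : ℤ, n₀ ≤ n → n ≤ N - 1 → ∀ x₁ x₂ x₃ x₄ : ℝ, x₁ ≤ x₂ → x₃ ≤ x₄ →
      f n x₁ x₃ - f n x₂ x₄ ≤ P n * (x₁ - x₂) + K n * (x₃ - x₄))
    {u η v : ℤ → ℝ}
    (hu : ∀ n : ℤ, n₀ ≤ n → n ≤ N - 1 → u (n + 1) = f n (u n) (u (n + 1)))
    (hηu : ∀ n : ℤ, n₀ ≤ n → n ≤ N → η n ≤ u n)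
    (hv₀ : v n₀ = u n₀)
    (hv : ∀ n : ℤ, n₀ ≤ n → n ≤ N - 1 →
      v (n + 1) = P n * v n + K n * v (n + 1) + f n (η n) (η (n + 1)) - P n * η n - K n * η (n + 1)) :
    ∀ n : ℤ, n₀ ≤ n → n ≤ N → v n ≤ u n := by
  have hdiff : ∀ n : ℤ, n₀ ≤ n → n ≤ N → (v - u) n ≤ 0 :=
    nonpos_of_le_linear_recurrence hP hK (by simp [hv₀]) fun n hn hnN =>
      linearized_step_sub_le (hf n hn hnN) (hηu n hn (by omega)) (hηu (n + 1) (by omega) (by omega))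
        (hu n hn hnN) (hv n hn hnN)
  exact fun n hn hnN => sub_nonpos.1 (hdiff n hn hnN)

theorem stmt_17_general (n₀ N : ℤ) (f : ℤ → ℝ → ℝ → ℝ) (P K : ℤ → ℝ) (x₀ : ℝ)
    (hP : ∀ n : ℤ, n₀ ≤ n → n ≤ N - 1 → P n > 0)
    (hK : ∀ n : ℤ, n₀ ≤ n → n ≤ N - 1 → K n < 1)
    (hf : ∀ n : ℤ, n₀ ≤ n → n ≤ N - 1 → ∀ x₁ x₂ x₃ x₄ : ℝ, x₁ ≤ x₂ → x₃ ≤ x₄ →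
      f n x₁ x₃ - f n x₂ x₄ ≤ P n * (x₁ - x₂) + K n * (x₃ - x₄))
    (α u : ℤ → ℝ)
    (hsol : ∀ n : ℤ, n₀ ≤ n → n ≤ N - 1 → u (n + 1) = f n (u n) (u (n + 1)))
    (hu0 : u n₀ = x₀)
    (hαu : ∀ n : ℤ, n₀ ≤ n → n ≤ N → α n ≤ u n)
    (A : ℕ → ℤ → ℝ)
    (hA0 : ∀ n : ℤ, A 0 n = α n)
    (hAinit : ∀ j : ℕ, A (j + 1) n₀ = x₀)
    (hAeq : ∀ j : ℕ, ∀ n : ℤ, n₀ ≤ n → n ≤ N - 1 →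
      A (j + 1) (n + 1) = P n * A (j + 1) n + K n * A (j + 1) (n + 1)
        + f n (A j n) (A j (n + 1)) - P n * A j n - K n * A j (n + 1)) :
    ∀ j : ℕ, ∀ n : ℤ, n₀ ≤ n → n ≤ N → A j n ≤ u n := by
  intro j
  induction j with
  | zero => simpa only [hA0] using hαu
  | succ j ih =>
    exact linearized_solution_le_of_le (fun n hn hnN => (hP n hn hnN).le) hK hf hsol ih
      ((hAinit j).trans hu0.symm) (hAeq j)

/-- Minimality: the lower-solution iterates stay below every solution between
the lower and upper solutions (impulse-free case). -/
theorem stmt_17 (n₀ N : ℤ) (f : ℤ → ℝ → ℝ → ℝ) (P K : ℤ → ℝ) (x₀ : ℝ)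
    (hP : ∀ n : ℤ, n₀ ≤ n → n ≤ N - 1 → P n > 0)
    (hK : ∀ n : ℤ, n₀ ≤ n → n ≤ N - 1 → K n < 1)
    (hf : ∀ n : ℤ, n₀ ≤ n → n ≤ N - 1 → ∀ x₁ x₂ x₃ x₄ : ℝ, x₁ ≤ x₂ → x₃ ≤ x₄ →
      f n x₁ x₃ - f n x₂ x₄ ≤ P n * (x₁ - x₂) + K n * (x₃ - x₄))
    (α β u : ℤ → ℝ)
    (hαlow : ∀ n : ℤ, n₀ ≤ n → n ≤ N - 1 → α (n + 1) ≤ f n (α n) (α (n + 1)))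
    (hα0 : α n₀ ≤ x₀)
    (hβup : ∀ n : ℤ, n₀ ≤ n → n ≤ N - 1 → β (n + 1) ≥ f n (β n) (β (n + 1)))
    (hβ0 : x₀ ≤ β n₀)
    (hαβ : ∀ n : ℤ, n₀ ≤ n → n ≤ N → α n ≤ β n)
    (hsol : ∀ n : ℤ, n₀ ≤ n → n ≤ N - 1 → u (n + 1) = f n (u n) (u (n + 1)))
    (hu0 : u n₀ = x₀)
    (hαu : ∀ n : ℤ, n₀ ≤ n → n ≤ N → α n ≤ u n)
    (huβ : ∀ n : ℤ, n₀ ≤ n → n ≤ N → u n ≤ β n)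
    (A : ℕ → ℤ → ℝ)
    (hA0 : ∀ n : ℤ, A 0 n = α n)
    (hAinit : ∀ j : ℕ, A (j + 1) n₀ = x₀)
    (hAeq : ∀ j : ℕ, ∀ n : ℤ, n₀ ≤ n → n ≤ N - 1 →
      A (j + 1) (n + 1) = P n * A (j + 1) n + K n * A (j + 1) (n + 1)
        + f n (A j n) (A j (n + 1)) - P n * A j n - K n * A j (n + 1)) :
    ∀ j : ℕ, ∀ n : ℤ, n₀ ≤ n → n ≤ N → A j n ≤ u n :=
  stmt_17_general n₀ N f P K x₀ hP hK hf α u hsol hu0 hαu A hA0 hAinit hAeq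
end

section
/- Let K < 1 and P > 0 be constants and suppose α, β : ℤ[n₀,N] → ℝ satisfy α(n+1) ≤ f(n,α(n),α(n+1)), β(n+1) ≥ f(n,β(n),β(n+1)), α(n₀) ≤ x₀ ≤ β(n₀), and α(n) ≤ β(n) for all n, where f satisfies f(n,x₁,x₃) − f(n,x₂,x₄) ≤ P(x₁−x₂) + K(x₃−x₄) for x₁ ≤ x₂, x₃ ≤ x₄. Then the iterates α^{(1)} = Qα and β^{(1)} = Qβ of the linearized scheme satisfy α(n) ≤ α^{(1)}(n) ≤ β^{(1)}(n) ≤ β(n) for all n in [n₀,N]. -/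
/-- First-step ordering in the monotone iterative technique (impulse-free,
constant-coefficient case): α ≤ Qα ≤ Qβ ≤ β. -/
theorem stmt_19 (n₀ N : ℤ) (f : ℤ → ℝ → ℝ → ℝ) (P K x₀ : ℝ)
    (hP : P > 0) (hK : K < 1)
    (hf : ∀ n : ℤ, n₀ ≤ n → n ≤ N - 1 → ∀ x₁ x₂ x₃ x₄ : ℝ, x₁ ≤ x₂ → x₃ ≤ x₄ →
      f n x₁ x₃ - f n x₂ x₄ ≤ P * (x₁ - x₂) + K * (x₃ - x₄))
    (α β α₁ β₁ : ℤ → ℝ)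
    (hαlow : ∀ n : ℤ, n₀ ≤ n → n ≤ N - 1 → α (n + 1) ≤ f n (α n) (α (n + 1)))
    (hβup : ∀ n : ℤ, n₀ ≤ n → n ≤ N - 1 → β (n + 1) ≥ f n (β n) (β (n + 1)))
    (hα0 : α n₀ ≤ x₀) (hβ0 : x₀ ≤ β n₀)
    (hαβ : ∀ n : ℤ, n₀ ≤ n → n ≤ N → α n ≤ β n)
    (hα₁0 : α₁ n₀ = x₀)
    (hα₁eq : ∀ n : ℤ, n₀ ≤ n → n ≤ N - 1 →
      α₁ (n + 1) = P * α₁ n + K * α₁ (n + 1)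
        + f n (α n) (α (n + 1)) - P * α n - K * α (n + 1))
    (hβ₁0 : β₁ n₀ = x₀)
    (hβ₁eq : ∀ n : ℤ, n₀ ≤ n → n ≤ N - 1 →
      β₁ (n + 1) = P * β₁ n + K * β₁ (n + 1)
        + f n (β n) (β (n + 1)) - P * β n - K * β (n + 1)) :
    ∀ n : ℤ, n₀ ≤ n → n ≤ N →
      α n ≤ α₁ n ∧ α₁ n ≤ β₁ n ∧ β₁ n ≤ β n := by
  have main : ∀ n : ℤ, n₀ ≤ n → (n ≤ N →
      α n ≤ α₁ n ∧ α₁ n ≤ β₁ n ∧ β₁ n ≤ β n) := by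
    refine Int.le_induction ?_ ?_
    · intro _
      exact ⟨hα₁0 ▸ hα0, by rw [hα₁0, hβ₁0], hβ₁0 ▸ hβ0⟩
    intro n hn ih hN
    have hn1 : n ≤ N - 1 := by omega
    have hnN : n ≤ N := by omega
    obtain ⟨h1, h2, h3⟩ := ih hnN
    have hab := hαβ n hn hnN
    have hab1 := hαβ (n + 1) (by omega) hN
    have eα := hα₁eq n hn hn1
    have eβ := hβ₁eq n hn hn1
    have hK' : (0:ℝ) < 1 - K := by linarith
    refine ⟨?_, ?_, ?_⟩
    · nlinarith [hαlow n hn hn1, mul_nonneg hP.le (sub_nonneg.mpr h1)]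
    · have hff := hf n hn hn1 (α n) (β n) (α (n + 1)) (β (n + 1)) hab hab1
      nlinarith [mul_nonneg hP.le (sub_nonneg.mpr h2)]
    · nlinarith [hβup n hn hn1, mul_nonneg hP.le (sub_nonneg.mpr h3)]
  exact main
end
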